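/- (Generalized Ulam–Hyers–Rassias stability.) Let 0 < α < 1, b > 0, J = [0,b]. Let ψ : J → ℝ be increasing and continuously differentiable with ψ'(z) > 0 for all z ∈ J. Let F : J × ℝ × ℝ → ℝ and H : J × J × ℝ → ℝ be continuous satisfying (Q1) |F(z, u₁, u₂) − F(z, v₁, v₂)| ≤ n(z)(|u₁ − v₁| + |u₂ − v₂|) and (Q2) |H(z, τ, u) − H(z, τ, v)| ≤ k(z)|u − v| for continuous n, k : J → ℝ, and set W₁ = sup_{z ∈ J} |n(z)|, W₂ = sup_{z ∈ J} |k(z)|. Suppose ρ : J → ℝ is a continuous increasing nonnegative function and γ > 0 satisfy (Q3) (1/Γ(α)) ∫₀^z ψ'(κ)(ψ(z) − ψ(κ))^{α−1} ρ(κ) dκ ≤ γ ρ(z) for all z ∈ J, and that W₁(1 + W₂)γ < 1. Let ω : J → ℝ be continuously differentiable with |N^{α,ψ}ω(z) − F(z, ω(z), (1/Γ(α)) ∫₀^z ψ'(τ)(ψ(z) − ψ(τ))^{α−1} H(z, τ, N^{α,ψ}ω(τ)) dτ)| ≤ ρ(z) for all z ∈ J. If ϑ : J → ℝ is a continuously differentiable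 solution of N^{α,ψ}ϑ(z) = F(z, ϑ(z), (1/Γ(α)) ∫₀^z ψ'(τ)(ψ(z) − ψ(τ))^{α−1} H(z, τ, N^{α,ψ}ϑ(τ)) dτ) on J with ϑ(0) = ω(0), then for B = γ / (1 − W₁(1 + W₂)γ) one has |ω(z) − ϑ(z)| ≤ B ρ(z) for all z ∈ J. -/

import Mathlib

/-!
Write `e = N^α ω - N^α ϑ`. Fubini's theorem and the Beta integral give the semigroup law
`I^α I^β = I^(α+β)` of the ψ-fractional integrals, hence `I^α (N^α u) = u - u 0` and
`ω - ϑ = I^α e`. With (Q1) and (Q2) this yields `|e| ≤ ρ + c I^α |e|` for `c = W₁ (1 + W₂)`.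
Since `I^α exp (λ ψ) ≤ λ^(-α) exp (λ ψ)`, a bound `|e| ≤ θ ρ + M exp (λ ψ)` with
`θ = 1 / (1 - c γ)` improves, through (Q3), to the same bound with `M` replaced by `c λ^(-α) M`.
Choosing `λ^α = c + 1` and iterating gives `|e| ≤ θ ρ`, and then `|ω - ϑ| ≤ I^α |e| ≤ θ γ ρ`.
-/

open MeasureTheory Set

/-- ψ-Riemann–Liouville fractional integral of order `α` of `f` with respect to `ψ`
(with `ψ'` a given derivative function of `ψ`):
`I^{α,ψ} f (z) = (1/Γ(α)) ∫₀^z ψ'(κ) (ψ(z) - ψ(κ))^(α-1) f(κ) dκ`. -/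
noncomputable def psiInt (α : ℝ) (ψ ψ' f : ℝ → ℝ) (z : ℝ) : ℝ :=
  (1 / Real.Gamma α) * ∫ κ in (0:ℝ)..z, ψ' κ * (ψ z - ψ κ) ^ (α - 1) * f κ

/-- ψ-Caputo fractional derivative of order `α` (for `0 < α < 1`) of a function with
derivative `v'`, with respect to `ψ` (with derivative `ψ'`):
`N^{α,ψ} v (z) = (1/Γ(1-α)) ∫₀^z ψ'(κ) (ψ(z) - ψ(κ))^(-α) (v'(κ)/ψ'(κ)) dκ`. -/
noncomputable def psiCaputo (α : ℝ) (ψ ψ' v' : ℝ → ℝ) (z : ℝ) : ℝ :=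
  (1 / Real.Gamma (1 - α)) * ∫ κ in (0:ℝ)..z, ψ' κ * (ψ z - ψ κ) ^ (-α) * (v' κ / ψ' κ)

/-- Mittag-Leffler function `E_α(x) = ∑_{m=0}^∞ x^m / Γ(α m + 1)`. -/
noncomputable def mittagLeffler (α x : ℝ) : ℝ :=
  ∑' m : ℕ, x ^ m / Real.Gamma (α * m + 1)

section RealLine

variable {A C : ℝ}

theorem integrableOn_Ioo_sub_rpow {β : ℝ} (hβ : 0 < β) :
    IntegrableOn (fun x => (C - x) ^ (β - 1)) (Ioo A C) := by
  rcases le_or_gt C A with hCA | hAC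
  · simp [Ioo_eq_empty_of_le hCA]
  rw [← intervalIntegrable_iff_integrableOn_Ioo_of_le hAC.le]
  simpa using (intervalIntegral.intervalIntegrable_rpow' (a := C - A) (b := C - C)
    (by linarith : -1 < β - 1)).comp_sub_left C

theorem setIntegral_Ioo_sub_rpow {β : ℝ} (hβ : 0 < β) (hAC : A ≤ C) :
    ∫ x in Ioo A C, (C - x) ^ (β - 1) = (C - A) ^ β / β := by
  rw [← integral_Ioc_eq_integral_Ioo, ← intervalIntegral.integral_of_le hAC,
    intervalIntegral.integral_comp_sub_left (fun x => x ^ (β - 1)),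
    integral_rpow (by simp [hβ]), sub_self, sub_add_cancel, Real.zero_rpow hβ.ne', sub_zero]

theorem intervalIntegral_rpow_mul_sub_rpow {p q a : ℝ} (hp : 0 < p) (hq : 0 < q) (ha : 0 < a) :
    ∫ x in (0:ℝ)..a, x ^ (p - 1) * (a - x) ^ (q - 1) =
      a ^ (p + q - 1) * ProbabilityTheory.beta p q := by
  apply Complex.ofReal_injective
  have hbeta : Complex.betaIntegral p q = (ProbabilityTheory.beta p q : ℂ) := by
    rw [Complex.betaIntegral_eq_Gamma_mul_div _ _ (by simpa) (by simpa), ProbabilityTheory.beta]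
    push_cast [← Complex.Gamma_ofReal]
    rfl
  rw [← intervalIntegral.integral_ofReal, Complex.ofReal_mul, Complex.ofReal_cpow ha.le, ← hbeta]
  push_cast
  rw [← Complex.betaIntegral_scaled p q ha]
  refine intervalIntegral.integral_congr fun x hx => ?_
  rw [uIcc_of_le ha.le] at hx
  rw [Complex.ofReal_cpow hx.1, Complex.ofReal_cpow (sub_nonneg.2 hx.2)]
  push_cast
  rfl

theorem setIntegral_Ioo_sub_rpow_mul_sub_rpow {p q : ℝ} (hp : 0 < p) (hq : 0 < q)
    (hAC : A < C) :
    ∫ x in Ioo A C, (x - A) ^ (p - 1) * (C - x) ^ (q - 1) =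
      (C - A) ^ (p + q - 1) * ProbabilityTheory.beta p q := by
  rw [← integral_Ioc_eq_integral_Ioo, ← intervalIntegral.integral_of_le hAC.le,
    ← intervalIntegral_rpow_mul_sub_rpow hp hq (sub_pos.2 hAC), ← sub_self A,
    ← intervalIntegral.integral_comp_sub_right fun x => x ^ (p - 1) * (C - A - x) ^ (q - 1)]
  simp only [sub_sub_sub_cancel_right]

-- A non-integrable function has integral `0`, whereas the Beta integral is positive.
theorem integrableOn_Ioo_sub_rpow_mul_sub_rpow {p q : ℝ} (hp : 0 < p) (hq : 0 < q)
    (hAC : A < C) :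
    IntegrableOn (fun x => (x - A) ^ (p - 1) * (C - x) ^ (q - 1)) (Ioo A C) := by
  refine Integrable.of_integral_ne_zero ?_
  rw [setIntegral_Ioo_sub_rpow_mul_sub_rpow hp hq hAC]
  exact (mul_pos (Real.rpow_pos_of_pos (sub_pos.2 hAC) _)
    (ProbabilityTheory.beta_pos hp hq)).ne'

theorem setIntegral_Ioo_sub_rpow_mul_exp_le {α lam : ℝ} (hα : 0 < α) (hlam : 0 < lam) :
    ∫ x in Ioo A C, (C - x) ^ (α - 1) * Real.exp (lam * x) ≤
      Real.Gamma α * lam ^ (-α) * Real.exp (lam * C) := by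
  rcases le_or_gt C A with hCA | hAC
  · rw [Ioo_eq_empty_of_le hCA, Measure.restrict_empty, integral_zero_measure]
    positivity
  have hint : IntegrableOn (fun t : ℝ => t ^ (α - 1) * Real.exp (-(lam * t))) (Ioi 0) := by
    simpa [neg_mul] using
      integrableOn_rpow_mul_exp_neg_mul_rpow (p := 1) (by linarith) one_pos hlam
  have hshift : ∫ x in Ioo A C, (C - x) ^ (α - 1) * Real.exp (lam * x) =
      Real.exp (lam * C) * ∫ t in Ioo 0 (C - A), t ^ (α - 1) * Real.exp (-(lam * t)) := by
    rw [← integral_Ioc_eq_integral_Ioo, ← intervalIntegral.integral_of_le hAC.le,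
      ← integral_Ioc_eq_integral_Ioo, ← intervalIntegral.integral_of_le (sub_pos.2 hAC).le,
      ← intervalIntegral.integral_const_mul, ← sub_self C,
      ← intervalIntegral.integral_comp_sub_left]
    refine intervalIntegral.integral_congr fun x _ => ?_
    rw [show lam * x = lam * C + -(lam * (C - x)) by ring, Real.exp_add]
    ring
  calc ∫ x in Ioo A C, (C - x) ^ (α - 1) * Real.exp (lam * x)
      ≤ Real.exp (lam * C) * ∫ t in Ioi 0, t ^ (α - 1) * Real.exp (-(lam * t)) := by
        rw [hshift]
        refine mul_le_mul_of_nonneg_left (setIntegral_mono_set hint ?_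
          Ioo_subset_Ioi_self.eventuallyLE) (Real.exp_nonneg _)
        filter_upwards [ae_restrict_mem measurableSet_Ioi] with t ht
        exact mul_nonneg (Real.rpow_nonneg ht.le _) (Real.exp_nonneg _)
    _ = Real.Gamma α * lam ^ (-α) * Real.exp (lam * C) := by
        rw [Real.integral_rpow_mul_exp_neg_mul_Ioi hα hlam, one_div, Real.inv_rpow hlam.le,
          ← Real.rpow_neg hlam.le]
        ring

theorem integral_restrict_Ioo_indicator_Iio {c κ : ℝ} (hκ : κ ≤ c) (g : ℝ → ℝ) :
    ∫ s, (Iio κ).indicator g s ∂(volume.restrict (Ioo 0 c)) = ∫ s in Ioo 0 κ, g s := by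
  rw [integral_indicator measurableSet_Iio, Measure.restrict_restrict measurableSet_Iio,
    Iio_inter_Ioo, min_eq_left hκ]

theorem integral_restrict_Ioo_indicator_Ioi {s c : ℝ} (hs : 0 ≤ s) (g : ℝ → ℝ) :
    ∫ κ, (Ioi s).indicator g κ ∂(volume.restrict (Ioo 0 c)) = ∫ κ in Ioo s c, g κ := by
  rw [integral_indicator measurableSet_Ioi, Measure.restrict_restrict measurableSet_Ioi,
    Ioi_inter_Ioo, max_eq_left hs]

theorem le_of_forall_le_add_pow_mul {a c q M : ℝ} (hq₀ : 0 ≤ q) (hq₁ : q < 1)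
    (h : ∀ n : ℕ, a ≤ c + q ^ n * M) : a ≤ c := by
  have := ((tendsto_pow_atTop_nhds_zero_of_lt_one hq₀ hq₁).mul_const M).const_add c
  rw [zero_mul, add_zero] at this
  exact ge_of_tendsto' this h

theorem abs_le_sSup_image_abs {s : Set ℝ} (hs : IsCompact s) {f : ℝ → ℝ}
    (hf : ContinuousOn f s) {x : ℝ} (hx : x ∈ s) : |f x| ≤ sSup ((fun z => |f z|) '' s) :=
  le_csSup (hs.image_of_continuousOn hf.abs).bddAbove (mem_image_of_mem _ hx)

end RealLine

section psiInt

variable {β z : ℝ} {ψ ψ' f : ℝ → ℝ}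

theorem psiCaputo_eq_psiInt (α : ℝ) (ψ ψ' g : ℝ → ℝ) :
    psiCaputo α ψ ψ' g = psiInt (1 - α) ψ ψ' (fun κ => g κ / ψ' κ) := by
  funext z
  simp only [psiCaputo, psiInt, sub_sub_cancel_left]

theorem psiInt_eq_setIntegral (hz : 0 ≤ z) :
    psiInt β ψ ψ' f z =
      1 / Real.Gamma β * ∫ κ in Ioo 0 z, ψ' κ * (ψ z - ψ κ) ^ (β - 1) * f κ := by
  rw [psiInt, intervalIntegral.integral_of_le hz, integral_Ioc_eq_integral_Ioo]

theorem psiInt_const_mul (c : ℝ) :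
    psiInt β ψ ψ' (fun κ => c * f κ) z = c * psiInt β ψ ψ' f z := by
  simp only [psiInt, ← intervalIntegral.integral_const_mul]
  exact intervalIntegral.integral_congr fun κ _ => by ring

theorem psiInt_one : psiInt 1 ψ ψ' f z = ∫ κ in (0:ℝ)..z, ψ' κ * f κ := by
  simp [psiInt]

end psiInt

structure IsBddMeasurable (b : ℝ) (f : ℝ → ℝ) : Prop where
  aestronglyMeasurable : AEStronglyMeasurable f (volume.restrict (Ioo 0 b))
  exists_bound : ∃ C, ∀ x ∈ Icc 0 b, |f x| ≤ C

namespace IsBddMeasurable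

variable {b : ℝ} {f g : ℝ → ℝ}

theorem _root_.ContinuousOn.isBddMeasurable (hf : ContinuousOn f (Icc 0 b)) :
    IsBddMeasurable b f where
  aestronglyMeasurable := (hf.mono Ioo_subset_Icc_self).aestronglyMeasurable measurableSet_Ioo
  exists_bound := isCompact_Icc.exists_bound_of_continuousOn hf

theorem add (hf : IsBddMeasurable b f) (hg : IsBddMeasurable b g) :
    IsBddMeasurable b (fun x => f x + g x) where
  aestronglyMeasurable := hf.aestronglyMeasurable.add hg.aestronglyMeasurable
  exists_bound := by
    obtain ⟨C, hC⟩ := hf.exists_bound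
    obtain ⟨D, hD⟩ := hg.exists_bound
    exact ⟨C + D, fun x hx => (abs_add_le _ _).trans (add_le_add (hC x hx) (hD x hx))⟩

theorem sub (hf : IsBddMeasurable b f) (hg : IsBddMeasurable b g) :
    IsBddMeasurable b (fun x => f x - g x) where
  aestronglyMeasurable := hf.aestronglyMeasurable.sub hg.aestronglyMeasurable
  exists_bound := by
    obtain ⟨C, hC⟩ := hf.exists_bound
    obtain ⟨D, hD⟩ := hg.exists_bound
    exact ⟨C + D, fun x hx => (abs_sub _ _).trans (add_le_add (hC x hx) (hD x hx))⟩

theorem abs (hf : IsBddMeasurable b f) : IsBddMeasurable b (fun x => |f x|) where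
  aestronglyMeasurable := hf.aestronglyMeasurable.norm
  exists_bound := by simpa only [abs_abs] using hf.exists_bound

theorem const_mul (hf : IsBddMeasurable b f) (c : ℝ) :
    IsBddMeasurable b (fun x => c * f x) where
  aestronglyMeasurable := hf.aestronglyMeasurable.const_mul c
  exists_bound := by
    obtain ⟨C, hC⟩ := hf.exists_bound
    exact ⟨|c| * C, fun x hx => by
      rw [abs_mul]; exact mul_le_mul_of_nonneg_left (hC x hx) (abs_nonneg c)⟩

theorem comp_of_lipschitz {L : ℝ} {G : ℝ → ℝ → ℝ}
    (hG : ContinuousOn (fun q : ℝ × ℝ => G q.1 q.2) (Icc 0 b ×ˢ univ))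
    (hGL : ∀ τ ∈ Icc 0 b, ∀ u w, |G τ u - G τ w| ≤ L * |u - w|) (hf : IsBddMeasurable b f) :
    IsBddMeasurable b (fun τ => G τ (f τ)) where
  aestronglyMeasurable := by
    classical
    have hm : Measurable ((Icc 0 b ×ˢ univ).piecewise (fun q : ℝ × ℝ => G q.1 q.2) 0) :=
      hG.measurable_piecewise continuousOn_const (measurableSet_Icc.prod MeasurableSet.univ)
    refine (hm.comp_aemeasurable (aemeasurable_id.prodMk
      hf.aestronglyMeasurable.aemeasurable)).aestronglyMeasurable.congr ?_
    filter_upwards [ae_restrict_mem measurableSet_Ioo] with τ hτ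
    simp [Ioo_subset_Icc_self hτ]
  exists_bound := by
    obtain ⟨C, hC⟩ := hf.exists_bound
    obtain ⟨D, hD⟩ := isCompact_Icc.exists_bound_of_continuousOn
      (hG.comp (continuous_id.prodMk continuous_const).continuousOn
        fun τ hτ => ⟨hτ, mem_univ (0 : ℝ)⟩)
    refine ⟨D + |L| * C, fun τ hτ => ?_⟩
    have hLC : L * |f τ - 0| ≤ |L| * C := by
      rw [sub_zero]
      exact mul_le_mul (le_abs_self L) (hC τ hτ) (abs_nonneg _) (abs_nonneg L)
    calc |G τ (f τ)| ≤ |G τ 0| + |G τ (f τ) - G τ 0| := by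
          linarith [abs_sub_abs_le_abs_sub (G τ (f τ)) (G τ 0)]
      _ ≤ D + |L| * C := add_le_add (hD τ hτ) ((hGL τ hτ _ _).trans hLC)

end IsBddMeasurable

structure IsAdmissibleScale (ψ ψ' : ℝ → ℝ) (b : ℝ) : Prop where
  strictMonoOn : StrictMonoOn ψ (Icc 0 b)
  hasDerivWithinAt : ∀ z ∈ Icc 0 b, HasDerivWithinAt ψ (ψ' z) (Icc 0 b) z
  continuousOn_deriv : ContinuousOn ψ' (Icc 0 b)
  deriv_pos : ∀ z ∈ Icc 0 b, 0 < ψ' z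

noncomputable def doublePsiIntegrand (α β : ℝ) (ψ ψ' f : ℝ → ℝ) (z : ℝ) : ℝ × ℝ → ℝ :=
  {p : ℝ × ℝ | p.2 < p.1}.indicator fun p =>
    ψ' p.1 * (ψ z - ψ p.1) ^ (α - 1) * (ψ' p.2 * (ψ p.1 - ψ p.2) ^ (β - 1) * f p.2)

theorem doublePsiIntegrand_eq_indicator_Ioi {α β z : ℝ} {ψ ψ' f : ℝ → ℝ} (κ s : ℝ) :
    doublePsiIntegrand α β ψ ψ' f z (κ, s) = (Ioi s).indicator (fun κ =>
      ψ' κ * ((ψ κ - ψ s) ^ (β - 1) * (ψ z - ψ κ) ^ (α - 1)) * (ψ' s * f s)) κ := by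
  simp only [doublePsiIntegrand, indicator, mem_ofPred_eq, mem_Ioi]
  split_ifs <;> ring

namespace IsAdmissibleScale

variable {α β b c s z : ℝ} {ψ ψ' f g : ℝ → ℝ}

theorem continuousOn (hψ : IsAdmissibleScale ψ ψ' b) : ContinuousOn ψ (Icc 0 b) :=
  fun x hx => (hψ.hasDerivWithinAt x hx).continuousWithinAt

theorem image_Ioo (hψ : IsAdmissibleScale ψ ψ' b) (hs : 0 ≤ s) (hsz : s ≤ z) (hzb : z ≤ b) :
    ψ '' Ioo s z = Ioo (ψ s) (ψ z) :=
  (hψ.continuousOn.mono (Icc_subset_Icc hs hzb)).image_Ioo_of_strictMonoOn hsz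
    (hψ.strictMonoOn.mono (Icc_subset_Icc hs hzb))

theorem hasDerivWithinAt_Ioo (hψ : IsAdmissibleScale ψ ψ' b) (hs : 0 ≤ s) (hzb : z ≤ b) :
    ∀ x ∈ Ioo s z, HasDerivWithinAt ψ (ψ' x) (Ioo s z) x :=
  have hsub : Ioo s z ⊆ Icc 0 b := Ioo_subset_Icc_self.trans (Icc_subset_Icc hs hzb)
  fun x hx => (hψ.hasDerivWithinAt x (hsub hx)).mono hsub

theorem integrableOn_comp_iff (hψ : IsAdmissibleScale ψ ψ' b) (hs : 0 ≤ s) (hsz : s ≤ z)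
    (hzb : z ≤ b) (g : ℝ → ℝ) :
    IntegrableOn (fun κ => ψ' κ * g (ψ κ)) (Ioo s z) ↔ IntegrableOn g (Ioo (ψ s) (ψ z)) := by
  rw [← hψ.image_Ioo hs hsz hzb, integrableOn_image_iff_integrableOn_deriv_smul_of_monotoneOn
    measurableSet_Ioo (hψ.hasDerivWithinAt_Ioo hs hzb)
    (hψ.strictMonoOn.monotoneOn.mono (Ioo_subset_Icc_self.trans (Icc_subset_Icc hs hzb)))]
  rfl

theorem setIntegral_comp (hψ : IsAdmissibleScale ψ ψ' b) (hs : 0 ≤ s) (hsz : s ≤ z)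
    (hzb : z ≤ b) (g : ℝ → ℝ) :
    ∫ κ in Ioo s z, ψ' κ * g (ψ κ) = ∫ x in Ioo (ψ s) (ψ z), g x := by
  rw [← hψ.image_Ioo hs hsz hzb, integral_image_eq_integral_deriv_smul_of_monotoneOn
    measurableSet_Ioo (hψ.hasDerivWithinAt_Ioo hs hzb)
    (hψ.strictMonoOn.monotoneOn.mono (Ioo_subset_Icc_self.trans (Icc_subset_Icc hs hzb)))]
  rfl

theorem integrableOn_kernel (hψ : IsAdmissibleScale ψ ψ' b) (hβ : 0 < β) (hz : z ∈ Icc 0 b) :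
    IntegrableOn (fun κ => ψ' κ * (ψ z - ψ κ) ^ (β - 1)) (Ioo 0 z) :=
  (hψ.integrableOn_comp_iff le_rfl hz.1 hz.2 (fun x => (ψ z - x) ^ (β - 1))).2
    (integrableOn_Ioo_sub_rpow hβ)

theorem setIntegral_kernel (hψ : IsAdmissibleScale ψ ψ' b) (hβ : 0 < β) (hz : z ∈ Icc 0 b) :
    ∫ κ in Ioo 0 z, ψ' κ * (ψ z - ψ κ) ^ (β - 1) = (ψ z - ψ 0) ^ β / β := by
  rw [hψ.setIntegral_comp le_rfl hz.1 hz.2 (fun x => (ψ z - x) ^ (β - 1)),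
    setIntegral_Ioo_sub_rpow hβ (hψ.strictMonoOn.monotoneOn ⟨le_rfl, hz.1.trans hz.2⟩ hz hz.1)]

theorem kernel_nonneg (hψ : IsAdmissibleScale ψ ψ' b) (hz : z ∈ Icc 0 b) {κ : ℝ}
    (hκ : κ ∈ Ioo 0 z) : 0 ≤ ψ' κ * (ψ z - ψ κ) ^ (β - 1) :=
  have hκ' : κ ∈ Icc 0 b := ⟨hκ.1.le, hκ.2.le.trans hz.2⟩
  mul_nonneg (hψ.deriv_pos κ hκ').le
    (Real.rpow_nonneg (sub_nonneg.2 (hψ.strictMonoOn.monotoneOn hκ' hz hκ.2.le)) _)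

theorem integrableOn_beta_kernel (hψ : IsAdmissibleScale ψ ψ' b) (hα : 0 < α) (hβ : 0 < β)
    (hs : 0 ≤ s) (hsz : s < z) (hzb : z ≤ b) :
    IntegrableOn (fun κ => ψ' κ * ((ψ κ - ψ s) ^ (β - 1) * (ψ z - ψ κ) ^ (α - 1))) (Ioo s z) :=
  (hψ.integrableOn_comp_iff hs hsz.le hzb fun x => (x - ψ s) ^ (β - 1) * (ψ z - x) ^ (α - 1)).2
    (integrableOn_Ioo_sub_rpow_mul_sub_rpow hβ hα
      (hψ.strictMonoOn ⟨hs, hsz.le.trans hzb⟩ ⟨hs.trans hsz.le, hzb⟩ hsz))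

theorem setIntegral_beta_kernel (hψ : IsAdmissibleScale ψ ψ' b) (hα : 0 < α) (hβ : 0 < β)
    (hs : 0 ≤ s) (hsz : s < z) (hzb : z ≤ b) :
    ∫ κ in Ioo s z, ψ' κ * ((ψ κ - ψ s) ^ (β - 1) * (ψ z - ψ κ) ^ (α - 1)) =
      (ψ z - ψ s) ^ (β + α - 1) * ProbabilityTheory.beta β α := by
  rw [hψ.setIntegral_comp hs hsz.le hzb fun x => (x - ψ s) ^ (β - 1) * (ψ z - x) ^ (α - 1),
    setIntegral_Ioo_sub_rpow_mul_sub_rpow hβ hα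
      (hψ.strictMonoOn ⟨hs, hsz.le.trans hzb⟩ ⟨hs.trans hsz.le, hzb⟩ hsz)]

theorem integrableOn_psiInt_integrand (hψ : IsAdmissibleScale ψ ψ' b) (hβ : 0 < β)
    (hf : IsBddMeasurable b f) (hz : z ∈ Icc 0 b) :
    IntegrableOn (fun κ => ψ' κ * (ψ z - ψ κ) ^ (β - 1) * f κ) (Ioo 0 z) := by
  obtain ⟨C, hC⟩ := hf.exists_bound
  refine (hψ.integrableOn_kernel hβ hz).mul_bdd
    (hf.aestronglyMeasurable.mono_measure (Measure.restrict_mono (Ioo_subset_Ioo_right hz.2)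
      le_rfl)) (c := C) (ae_restrict_of_forall_mem measurableSet_Ioo fun x hx => ?_)
  exact hC x ⟨hx.1.le, hx.2.le.trans hz.2⟩

theorem psiInt_add (hψ : IsAdmissibleScale ψ ψ' b) (hβ : 0 < β) (hf : IsBddMeasurable b f)
    (hg : IsBddMeasurable b g) (hz : z ∈ Icc 0 b) :
    psiInt β ψ ψ' (fun κ => f κ + g κ) z = psiInt β ψ ψ' f z + psiInt β ψ ψ' g z := by
  rw [psiInt_eq_setIntegral hz.1, psiInt_eq_setIntegral hz.1, psiInt_eq_setIntegral hz.1,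
    ← mul_add, ← integral_add (hψ.integrableOn_psiInt_integrand hβ hf hz)
    (hψ.integrableOn_psiInt_integrand hβ hg hz)]
  simp only [mul_add]

theorem psiInt_sub (hψ : IsAdmissibleScale ψ ψ' b) (hβ : 0 < β) (hf : IsBddMeasurable b f)
    (hg : IsBddMeasurable b g) (hz : z ∈ Icc 0 b) :
    psiInt β ψ ψ' (fun κ => f κ - g κ) z = psiInt β ψ ψ' f z - psiInt β ψ ψ' g z := by
  rw [psiInt_eq_setIntegral hz.1, psiInt_eq_setIntegral hz.1, psiInt_eq_setIntegral hz.1,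
    ← mul_sub, ← integral_sub (hψ.integrableOn_psiInt_integrand hβ hf hz)
    (hψ.integrableOn_psiInt_integrand hβ hg hz)]
  simp only [mul_sub]

theorem psiInt_mono (hψ : IsAdmissibleScale ψ ψ' b) (hβ : 0 < β) (hf : IsBddMeasurable b f)
    (hg : IsBddMeasurable b g) (hz : z ∈ Icc 0 b) (hfg : ∀ κ ∈ Ioo 0 z, f κ ≤ g κ) :
    psiInt β ψ ψ' f z ≤ psiInt β ψ ψ' g z := by
  rw [psiInt_eq_setIntegral hz.1, psiInt_eq_setIntegral hz.1]
  have hΓ : 0 < Real.Gamma β := Real.Gamma_pos_of_pos hβ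
  gcongr ?_ * ?_
  exact setIntegral_mono_on (hψ.integrableOn_psiInt_integrand hβ hf hz)
    (hψ.integrableOn_psiInt_integrand hβ hg hz) measurableSet_Ioo fun κ hκ =>
      mul_le_mul_of_nonneg_left (hfg κ hκ) (hψ.kernel_nonneg hz hκ)

theorem psiInt_nonneg (hψ : IsAdmissibleScale ψ ψ' b) (hβ : 0 < β) (hz : z ∈ Icc 0 b)
    (hf : ∀ κ ∈ Ioo 0 z, 0 ≤ f κ) : 0 ≤ psiInt β ψ ψ' f z := by
  rw [psiInt_eq_setIntegral hz.1]
  have hΓ : 0 < Real.Gamma β := Real.Gamma_pos_of_pos hβ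
  exact mul_nonneg (by positivity) (setIntegral_nonneg measurableSet_Ioo fun κ hκ =>
    mul_nonneg (hψ.kernel_nonneg hz hκ) (hf κ hκ))

theorem abs_psiInt_le (hψ : IsAdmissibleScale ψ ψ' b) (hβ : 0 < β) (hz : z ∈ Icc 0 b) :
    |psiInt β ψ ψ' f z| ≤ psiInt β ψ ψ' (fun κ => |f κ|) z := by
  have hΓ : 0 < 1 / Real.Gamma β := one_div_pos.2 (Real.Gamma_pos_of_pos hβ)
  rw [psiInt_eq_setIntegral hz.1, psiInt_eq_setIntegral hz.1, abs_mul, abs_of_pos hΓ]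
  refine mul_le_mul_of_nonneg_left (abs_integral_le_integral_abs.trans_eq
    (setIntegral_congr_fun measurableSet_Ioo fun κ hκ => ?_)) hΓ.le
  rw [abs_mul, abs_of_nonneg (hψ.kernel_nonneg hz hκ)]

theorem abs_psiInt_sub_psiInt_le (hψ : IsAdmissibleScale ψ ψ' b) (hβ : 0 < β) {h : ℝ → ℝ}
    (hf : IsBddMeasurable b f) (hg : IsBddMeasurable b g) (hh : IsBddMeasurable b h)
    (hz : z ∈ Icc 0 b) (hfgh : ∀ κ ∈ Ioo 0 z, |f κ - g κ| ≤ h κ) :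
    |psiInt β ψ ψ' f z - psiInt β ψ ψ' g z| ≤ psiInt β ψ ψ' h z := by
  rw [← hψ.psiInt_sub hβ hf hg hz]
  exact (hψ.abs_psiInt_le hβ hz).trans (hψ.psiInt_mono hβ (hf.sub hg).abs hh hz hfgh)

theorem psiInt_const (hψ : IsAdmissibleScale ψ ψ' b) (hβ : 0 < β) (hz : z ∈ Icc 0 b) (C : ℝ) :
    psiInt β ψ ψ' (fun _ => C) z = C * (ψ z - ψ 0) ^ β / Real.Gamma (β + 1) := by
  rw [psiInt_eq_setIntegral hz.1, integral_mul_const, hψ.setIntegral_kernel hβ hz,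
    Real.Gamma_add_one hβ.ne']
  field_simp

theorem continuousOn_kernel_prod (hψ : IsAdmissibleScale ψ ψ' b) :
    ContinuousOn (fun p : ℝ × ℝ => ψ' p.2 * (ψ p.1 - ψ p.2) ^ (β - 1))
      ({p | p.2 < p.1} ∩ Ioo 0 b ×ˢ Ioo 0 b) := by
  have h₁ : MapsTo Prod.fst ({p : ℝ × ℝ | p.2 < p.1} ∩ Ioo 0 b ×ˢ Ioo 0 b) (Icc 0 b) :=
    fun p hp => Ioo_subset_Icc_self hp.2.1
  have h₂ : MapsTo Prod.snd ({p : ℝ × ℝ | p.2 < p.1} ∩ Ioo 0 b ×ˢ Ioo 0 b) (Icc 0 b) :=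
    fun p hp => Ioo_subset_Icc_self hp.2.2
  refine (hψ.continuousOn_deriv.comp continuous_snd.continuousOn h₂).mul
    (((hψ.continuousOn.comp continuous_fst.continuousOn h₁).sub
      (hψ.continuousOn.comp continuous_snd.continuousOn h₂)).rpow_const fun p hp => ?_)
  exact Or.inl (sub_pos.2 (hψ.strictMonoOn (h₂ hp) (h₁ hp) hp.1)).ne'

theorem aestronglyMeasurable_indicator_kernel_prod (hψ : IsAdmissibleScale ψ ψ' b)
    (hcb : c ≤ b) (hf : AEStronglyMeasurable f (volume.restrict (Ioo 0 c))) :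
    AEStronglyMeasurable
      ({p : ℝ × ℝ | p.2 < p.1}.indicator fun p => ψ' p.2 * (ψ p.1 - ψ p.2) ^ (β - 1) * f p.2)
      ((volume.restrict (Ioo 0 c)).prod (volume.restrict (Ioo 0 c))) := by
  have hD : MeasurableSet {p : ℝ × ℝ | p.2 < p.1} :=
    measurableSet_lt measurable_snd measurable_fst
  rw [aestronglyMeasurable_indicator_iff hD]
  refine AEStronglyMeasurable.mul ?_
    (hf.comp_quasiMeasurePreserving Measure.quasiMeasurePreserving_snd).restrict
  rw [Measure.prod_restrict, Measure.restrict_restrict hD]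
  exact ((hψ.continuousOn_kernel_prod (β := β)).mono (inter_subset_inter_right _
    (prod_mono (Ioo_subset_Ioo_right hcb) (Ioo_subset_Ioo_right hcb)))).aestronglyMeasurable
    (hD.inter (measurableSet_Ioo.prod measurableSet_Ioo))

theorem aestronglyMeasurable_psiInt (hψ : IsAdmissibleScale ψ ψ' b)
    (hf : AEStronglyMeasurable f (volume.restrict (Ioo 0 b))) :
    AEStronglyMeasurable (psiInt β ψ ψ' f) (volume.restrict (Ioo 0 b)) := by
  refine ((hψ.aestronglyMeasurable_indicator_kernel_prod le_rfl hf (β := β)).integral_prod_right'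
    |>.const_mul (1 / Real.Gamma β)).congr ?_
  filter_upwards [ae_restrict_mem measurableSet_Ioo] with τ hτ
  rw [psiInt_eq_setIntegral hτ.1.le]
  exact congrArg _ (integral_restrict_Ioo_indicator_Iio hτ.2.le _)

theorem isBddMeasurable_psiInt (hψ : IsAdmissibleScale ψ ψ' b) (hβ : 0 < β)
    (hf : IsBddMeasurable b f) : IsBddMeasurable b (psiInt β ψ ψ' f) where
  aestronglyMeasurable := hψ.aestronglyMeasurable_psiInt hf.aestronglyMeasurable
  exists_bound := by
    obtain ⟨C, hC⟩ := hf.exists_bound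
    refine ⟨|C| * (ψ b - ψ 0) ^ β / Real.Gamma (β + 1), fun z hz => ?_⟩
    have hb : b ∈ Icc 0 b := ⟨hz.1.trans hz.2, le_rfl⟩
    have h0z : 0 ≤ ψ z - ψ 0 :=
      sub_nonneg.2 (hψ.strictMonoOn.monotoneOn ⟨le_rfl, hb.1⟩ hz hz.1)
    have hzb : ψ z ≤ ψ b := hψ.strictMonoOn.monotoneOn hz hb hz.2
    calc |psiInt β ψ ψ' f z|
        ≤ psiInt β ψ ψ' (fun _ => |C|) z :=
          (hψ.abs_psiInt_le hβ hz).trans (hψ.psiInt_mono hβ hf.abs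
            continuousOn_const.isBddMeasurable hz fun κ hκ =>
              (hC κ ⟨hκ.1.le, hκ.2.le.trans hz.2⟩).trans (le_abs_self C))
      _ = |C| * (ψ z - ψ 0) ^ β / Real.Gamma (β + 1) := hψ.psiInt_const hβ hz _
      _ ≤ |C| * (ψ b - ψ 0) ^ β / Real.Gamma (β + 1) := by gcongr

theorem isBddMeasurable_psiCaputo (hψ : IsAdmissibleScale ψ ψ' b) (hα : α < 1)
    (hg : ContinuousOn g (Icc 0 b)) : IsBddMeasurable b (psiCaputo α ψ ψ' g) := by
  rw [psiCaputo_eq_psiInt]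
  exact hψ.isBddMeasurable_psiInt (sub_pos.2 hα)
    (hg.div hψ.continuousOn_deriv fun x hx => (hψ.deriv_pos x hx).ne').isBddMeasurable

theorem integrable_doublePsiIntegrand_fst (hψ : IsAdmissibleScale ψ ψ' b) (hα : 0 < α)
    (hβ : 0 < β) (hzb : z ≤ b) (hs : s ∈ Ioo 0 z) :
    Integrable (fun κ => doublePsiIntegrand α β ψ ψ' f z (κ, s))
      (volume.restrict (Ioo 0 z)) := by
  simp only [doublePsiIntegrand_eq_indicator_Ioi]
  rw [integrable_indicator_iff measurableSet_Ioi, IntegrableOn,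
    Measure.restrict_restrict measurableSet_Ioi, Ioi_inter_Ioo, max_eq_left hs.1.le]
  exact (hψ.integrableOn_beta_kernel hα hβ hs.1.le hs.2 hzb).mul_const _

theorem integral_doublePsiIntegrand_fst (hψ : IsAdmissibleScale ψ ψ' b) (hα : 0 < α)
    (hβ : 0 < β) (hzb : z ≤ b) (hs : s ∈ Ioo 0 z) :
    ∫ κ, doublePsiIntegrand α β ψ ψ' f z (κ, s) ∂(volume.restrict (Ioo 0 z)) =
      ProbabilityTheory.beta β α * (ψ' s * (ψ z - ψ s) ^ (α + β - 1) * f s) := by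
  simp only [doublePsiIntegrand_eq_indicator_Ioi]
  rw [integral_restrict_Ioo_indicator_Ioi hs.1.le, integral_mul_const,
    hψ.setIntegral_beta_kernel hα hβ hs.1.le hs.2 hzb, add_comm β α]
  ring

theorem norm_doublePsiIntegrand (hψ : IsAdmissibleScale ψ ψ' b) (hzb : z ≤ b) {κ : ℝ}
    (hκ : κ ∈ Ioo 0 z) (hs : s ∈ Ioo 0 z) :
    ‖doublePsiIntegrand α β ψ ψ' f z (κ, s)‖ =
      doublePsiIntegrand α β ψ ψ' (fun x => |f x|) z (κ, s) := by
  simp only [doublePsiIntegrand, indicator, mem_ofPred_eq]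
  split_ifs with hsκ
  · rw [Real.norm_eq_abs, abs_mul, abs_of_nonneg (hψ.kernel_nonneg ⟨hs.1.le.trans hs.2.le, hzb⟩ hκ),
      abs_mul, abs_of_nonneg (hψ.kernel_nonneg ⟨hκ.1.le, hκ.2.le.trans hzb⟩ ⟨hs.1, hsκ⟩)]
  · exact norm_zero

theorem aestronglyMeasurable_doublePsiIntegrand (hψ : IsAdmissibleScale ψ ψ' b) (hα : 0 < α)
    (hz : z ∈ Icc 0 b) (hf : AEStronglyMeasurable f (volume.restrict (Ioo 0 z))) :
    AEStronglyMeasurable (doublePsiIntegrand α β ψ ψ' f z)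
      ((volume.restrict (Ioo 0 z)).prod (volume.restrict (Ioo 0 z))) := by
  refine ((hψ.integrableOn_kernel hα hz).aestronglyMeasurable.comp_quasiMeasurePreserving
    Measure.quasiMeasurePreserving_fst |>.mul
      (hψ.aestronglyMeasurable_indicator_kernel_prod (β := β) hz.2 hf)).congr
    (ae_of_all _ fun p => ?_)
  exact (indicator_mul_right _ (fun p : ℝ × ℝ => ψ' p.1 * (ψ z - ψ p.1) ^ (α - 1)) _).symm

theorem integrable_doublePsiIntegrand (hψ : IsAdmissibleScale ψ ψ' b) (hα : 0 < α)
    (hβ : 0 < β) (hf : IsBddMeasurable b f) (hz : z ∈ Icc 0 b) :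
    Integrable (doublePsiIntegrand α β ψ ψ' f z)
      ((volume.restrict (Ioo 0 z)).prod (volume.restrict (Ioo 0 z))) := by
  have hfz : AEStronglyMeasurable f (volume.restrict (Ioo 0 z)) :=
    hf.aestronglyMeasurable.mono_measure
      (Measure.restrict_mono (Ioo_subset_Ioo_right hz.2) le_rfl)
  refine (integrable_prod_iff' (hψ.aestronglyMeasurable_doublePsiIntegrand hα hz hfz)).2
    ⟨ae_restrict_of_forall_mem measurableSet_Ioo fun s hs =>
      hψ.integrable_doublePsiIntegrand_fst hα hβ hz.2 hs, ?_⟩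
  refine ((hψ.integrableOn_psiInt_integrand (add_pos hα hβ) hf.abs hz).const_mul
    (ProbabilityTheory.beta β α)).congr ?_
  filter_upwards [ae_restrict_mem measurableSet_Ioo] with s hs
  rw [← hψ.integral_doublePsiIntegrand_fst (f := fun x => |f x|) hα hβ hz.2 hs]
  exact setIntegral_congr_fun measurableSet_Ioo fun κ hκ =>
    (hψ.norm_doublePsiIntegrand hz.2 hκ hs).symm

theorem psiInt_psiInt (hψ : IsAdmissibleScale ψ ψ' b) (hα : 0 < α) (hβ : 0 < β)
    (hf : IsBddMeasurable b f) (hz : z ∈ Icc 0 b) :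
    psiInt α ψ ψ' (psiInt β ψ ψ' f) z = psiInt (α + β) ψ ψ' f z := by
  have hΓα := (Real.Gamma_pos_of_pos hα).ne'
  have hΓβ := (Real.Gamma_pos_of_pos hβ).ne'
  have hinner : ∀ κ ∈ Ioo 0 z,
      ∫ s in Ioo 0 z, doublePsiIntegrand α β ψ ψ' f z (κ, s) =
        Real.Gamma β * (ψ' κ * (ψ z - ψ κ) ^ (α - 1) * psiInt β ψ ψ' f κ) := fun κ hκ => by
    rw [show ∫ s in Ioo 0 z, doublePsiIntegrand α β ψ ψ' f z (κ, s) = _ from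
      integral_restrict_Ioo_indicator_Iio hκ.2.le fun s =>
        ψ' κ * (ψ z - ψ κ) ^ (α - 1) * (ψ' s * (ψ κ - ψ s) ^ (β - 1) * f s),
      integral_const_mul, psiInt_eq_setIntegral hκ.1.le]
    field_simp
  rw [psiInt_eq_setIntegral hz.1, psiInt_eq_setIntegral hz.1]
  calc 1 / Real.Gamma α * ∫ κ in Ioo 0 z, ψ' κ * (ψ z - ψ κ) ^ (α - 1) * psiInt β ψ ψ' f κ
      = 1 / Real.Gamma α / Real.Gamma β *
          ∫ κ in Ioo 0 z, ∫ s in Ioo 0 z, doublePsiIntegrand α β ψ ψ' f z (κ, s) := by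
        rw [setIntegral_congr_fun measurableSet_Ioo hinner, integral_const_mul]
        field_simp
    _ = 1 / Real.Gamma α / Real.Gamma β *
          ∫ s in Ioo 0 z, ∫ κ in Ioo 0 z, doublePsiIntegrand α β ψ ψ' f z (κ, s) := by
        rw [integral_integral_swap (f := fun κ s => doublePsiIntegrand α β ψ ψ' f z (κ, s))
          (hψ.integrable_doublePsiIntegrand hα hβ hf hz)]
    _ = _ := by
        rw [setIntegral_congr_fun measurableSet_Ioo fun s hs =>
          hψ.integral_doublePsiIntegrand_fst hα hβ hz.2 hs, integral_const_mul,
          ProbabilityTheory.beta, add_comm β α]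
        field_simp

theorem psiInt_psiCaputo (hψ : IsAdmissibleScale ψ ψ' b) (hα₀ : 0 < α) (hα₁ : α < 1)
    {u u' : ℝ → ℝ} (hu : ∀ x ∈ Icc 0 b, HasDerivWithinAt u (u' x) (Icc 0 b) x)
    (hu' : ContinuousOn u' (Icc 0 b)) (hz : z ∈ Icc 0 b) :
    psiInt α ψ ψ' (psiCaputo α ψ ψ' u') z = u z - u 0 := by
  have hsub : Icc 0 z ⊆ Icc 0 b := Icc_subset_Icc le_rfl hz.2
  have hg : IsBddMeasurable b fun κ => u' κ / ψ' κ :=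
    (hu'.div hψ.continuousOn_deriv fun x hx => (hψ.deriv_pos x hx).ne').isBddMeasurable
  rw [psiCaputo_eq_psiInt, hψ.psiInt_psiInt hα₀ (sub_pos.2 hα₁) hg hz, add_sub_cancel,
    psiInt_one, intervalIntegral.integral_congr (g := u') fun κ hκ => ?_]
  · refine intervalIntegral.integral_eq_sub_of_hasDeriv_right_of_le hz.1
      (fun x hx => (hu x (hsub hx)).continuousWithinAt.mono hsub) (fun x hx => ?_)
      ((hu'.mono hsub).intervalIntegrable_of_Icc hz.1)
    exact ((hu x (hsub (Ioo_subset_Icc_self hx))).hasDerivAt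
      (Icc_mem_nhds hx.1 (hx.2.trans_le hz.2))).hasDerivWithinAt
  · rw [uIcc_of_le hz.1] at hκ
    exact mul_div_cancel₀ _ (hψ.deriv_pos κ (hsub hκ)).ne'

theorem abs_sub_le_psiInt_abs_psiCaputo_sub (hψ : IsAdmissibleScale ψ ψ' b) (hα₀ : 0 < α)
    (hα₁ : α < 1) {u u' v v' : ℝ → ℝ}
    (hu : ∀ x ∈ Icc 0 b, HasDerivWithinAt u (u' x) (Icc 0 b) x) (hu' : ContinuousOn u' (Icc 0 b))
    (hv : ∀ x ∈ Icc 0 b, HasDerivWithinAt v (v' x) (Icc 0 b) x) (hv' : ContinuousOn v' (Icc 0 b))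
    (huv : u 0 = v 0) (hz : z ∈ Icc 0 b) :
    |u z - v z| ≤
      psiInt α ψ ψ' (fun τ => |psiCaputo α ψ ψ' u' τ - psiCaputo α ψ ψ' v' τ|) z := by
  have hNu := hψ.isBddMeasurable_psiCaputo hα₁ hu'
  have hNv := hψ.isBddMeasurable_psiCaputo hα₁ hv'
  have := hψ.abs_psiInt_sub_psiInt_le hα₀ hNu hNv (hNu.sub hNv).abs hz fun _ _ => le_rfl
  rwa [hψ.psiInt_psiCaputo hα₀ hα₁ hu hu' hz, hψ.psiInt_psiCaputo hα₀ hα₁ hv hv' hz, huv,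
    sub_sub_sub_cancel_right] at this

theorem abs_psiInt_comp_sub_le (hψ : IsAdmissibleScale ψ ψ' b) (hβ : 0 < β) {L : ℝ}
    {G : ℝ → ℝ → ℝ} (hG : ContinuousOn (fun q : ℝ × ℝ => G q.1 q.2) (Icc 0 b ×ˢ univ))
    (hGL : ∀ τ ∈ Icc 0 b, ∀ u w, |G τ u - G τ w| ≤ L * |u - w|)
    (hf : IsBddMeasurable b f) (hg : IsBddMeasurable b g) (hz : z ∈ Icc 0 b) :
    |psiInt β ψ ψ' (fun τ => G τ (f τ)) z - psiInt β ψ ψ' (fun τ => G τ (g τ)) z| ≤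
      L * psiInt β ψ ψ' (fun τ => |f τ - g τ|) z := by
  rw [← psiInt_const_mul]
  exact hψ.abs_psiInt_sub_psiInt_le hβ (hf.comp_of_lipschitz hG hGL)
    (hg.comp_of_lipschitz hG hGL) ((hf.sub hg).abs.const_mul L) hz
    fun τ hτ => hGL τ ⟨hτ.1.le, hτ.2.le.trans hz.2⟩ _ _

theorem psiInt_exp_le (hψ : IsAdmissibleScale ψ ψ' b) (hα : 0 < α) {lam : ℝ} (hlam : 0 < lam)
    (hz : z ∈ Icc 0 b) :
    psiInt α ψ ψ' (fun κ => Real.exp (lam * ψ κ)) z ≤ lam ^ (-α) * Real.exp (lam * ψ z) := by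
  have hΓ := Real.Gamma_pos_of_pos hα
  rw [psiInt_eq_setIntegral hz.1]
  simp_rw [mul_assoc (ψ' _)]
  rw [hψ.setIntegral_comp le_rfl hz.1 hz.2 fun x => (ψ z - x) ^ (α - 1) * Real.exp (lam * x)]
  calc 1 / Real.Gamma α * ∫ x in Ioo (ψ 0) (ψ z), (ψ z - x) ^ (α - 1) * Real.exp (lam * x)
      ≤ 1 / Real.Gamma α * (Real.Gamma α * lam ^ (-α) * Real.exp (lam * ψ z)) := by
        gcongr
        exact setIntegral_Ioo_sub_rpow_mul_exp_le hα hlam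
    _ = lam ^ (-α) * Real.exp (lam * ψ z) := by field_simp

theorem exists_le_add_mul_exp (hψ : IsAdmissibleScale ψ ψ' b) {u ρ : ℝ → ℝ}
    (hu : IsBddMeasurable b u) (hρ : ContinuousOn ρ (Icc 0 b)) {θ lam : ℝ} (hθ : 0 ≤ θ)
    (hlam : 0 ≤ lam) :
    ∃ M, 0 ≤ M ∧ ∀ z ∈ Icc 0 b, u z ≤ θ * ρ z + M * Real.exp (lam * ψ z) := by
  obtain ⟨Cu, hCu⟩ := hu.exists_bound
  obtain ⟨Cρ, hCρ⟩ := isCompact_Icc.exists_bound_of_continuousOn hρ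
  refine ⟨max (Cu + θ * Cρ) 0 * Real.exp (-(lam * ψ 0)), by positivity, fun z hz => ?_⟩
  have hψz : lam * ψ 0 ≤ lam * ψ z := mul_le_mul_of_nonneg_left
    (hψ.strictMonoOn.monotoneOn ⟨le_rfl, hz.1.trans hz.2⟩ hz hz.1) hlam
  have h₁ : 1 ≤ Real.exp (-(lam * ψ 0)) * Real.exp (lam * ψ z) := by
    rw [← Real.exp_add]; exact Real.one_le_exp (by linarith)
  have h₂ := (le_abs_self _).trans (hCu z hz)
  have h₃ := (neg_le_neg (hCρ z hz)).trans (neg_abs_le (ρ z))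
  nlinarith [le_max_left (Cu + θ * Cρ) 0, le_max_right (Cu + θ * Cρ) 0]

theorem le_add_mul_of_le_add_mul (hψ : IsAdmissibleScale ψ ψ' b) (hα : 0 < α)
    {u ρ w : ℝ → ℝ} {c γ θ q M : ℝ} (hu : IsBddMeasurable b u) (hρ : IsBddMeasurable b ρ)
    (hw : IsBddMeasurable b w) (hc : 0 ≤ c) (hθ : 0 ≤ θ) (hM : 0 ≤ M)
    (hργ : ∀ z ∈ Icc 0 b, psiInt α ψ ψ' ρ z ≤ γ * ρ z)
    (hwq : ∀ z ∈ Icc 0 b, psiInt α ψ ψ' w z ≤ q * w z)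
    (hu_le : ∀ z ∈ Icc 0 b, u z ≤ ρ z + c * psiInt α ψ ψ' u z)
    (hM_le : ∀ z ∈ Icc 0 b, u z ≤ θ * ρ z + M * w z) :
    ∀ z ∈ Icc 0 b, u z ≤ (1 + c * θ * γ) * ρ z + c * q * M * w z := by
  intro z hz
  have hIu : psiInt α ψ ψ' u z ≤ θ * (γ * ρ z) + M * (q * w z) :=
    calc psiInt α ψ ψ' u z
        ≤ psiInt α ψ ψ' (fun κ => θ * ρ κ + M * w κ) z :=
          hψ.psiInt_mono hα hu ((hρ.const_mul θ).add (hw.const_mul M)) hz fun κ hκ =>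
            hM_le κ ⟨hκ.1.le, hκ.2.le.trans hz.2⟩
      _ = θ * psiInt α ψ ψ' ρ z + M * psiInt α ψ ψ' w z := by
          rw [hψ.psiInt_add hα (hρ.const_mul θ) (hw.const_mul M) hz, psiInt_const_mul,
            psiInt_const_mul]
      _ ≤ θ * (γ * ρ z) + M * (q * w z) := by gcongr <;> [exact hργ z hz; exact hwq z hz]
  calc u z ≤ ρ z + c * psiInt α ψ ψ' u z := hu_le z hz
    _ ≤ ρ z + c * (θ * (γ * ρ z) + M * (q * w z)) := by gcongr
    _ = (1 + c * θ * γ) * ρ z + c * q * M * w z := by ring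

theorem le_div_of_le_add_mul_psiInt (hψ : IsAdmissibleScale ψ ψ' b) (hα : 0 < α)
    {u ρ : ℝ → ℝ} {c γ : ℝ} (hu : IsBddMeasurable b u) (hρ : ContinuousOn ρ (Icc 0 b))
    (hc : 0 ≤ c) (hcγ : c * γ < 1) (hργ : ∀ z ∈ Icc 0 b, psiInt α ψ ψ' ρ z ≤ γ * ρ z)
    (hu_le : ∀ z ∈ Icc 0 b, u z ≤ ρ z + c * psiInt α ψ ψ' u z) :
    ∀ z ∈ Icc 0 b, u z ≤ ρ z / (1 - c * γ) := by
  have hcγ' : 1 - c * γ ≠ 0 := (sub_pos.2 hcγ).ne'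
  set θ := 1 / (1 - c * γ)
  have hθ : 0 < θ := one_div_pos.2 (sub_pos.2 hcγ)
  have hθ_eq : 1 + c * θ * γ = θ := by simp only [θ]; field_simp; ring
  -- `λ ^ α = c + 1` makes the weight `exp (λ ψ)` contract by the factor `q = c / (c + 1) < 1`.
  set lam := (c + 1) ^ α⁻¹
  have hlam : 0 < lam := Real.rpow_pos_of_pos (by linarith) _
  have hlam_pow : lam ^ (-α) = 1 / (c + 1) := by
    rw [← Real.rpow_mul (by linarith), inv_mul_eq_div, neg_div, div_self hα.ne',
      Real.rpow_neg_one, one_div]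
  set w := fun x => Real.exp (lam * ψ x)
  have hw : IsBddMeasurable b w := (Real.continuous_exp.comp_continuousOn
    (continuousOn_const.mul hψ.continuousOn)).isBddMeasurable
  have hwq : ∀ z ∈ Icc 0 b, psiInt α ψ ψ' w z ≤ 1 / (c + 1) * w z := fun z hz =>
    hlam_pow ▸ hψ.psiInt_exp_le hα hlam hz
  set q := c * (1 / (c + 1))
  have hq : q < 1 := by simp only [q]; rw [mul_one_div, div_lt_one (by linarith)]; linarith
  obtain ⟨M, hM, hM_le⟩ := hψ.exists_le_add_mul_exp hu hρ hθ.le hlam.le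
  have hiter : ∀ n : ℕ, ∀ z ∈ Icc 0 b, u z ≤ θ * ρ z + q ^ n * (M * w z) := by
    intro n
    induction n with
    | zero => simpa using hM_le
    | succ n ih =>
      intro z hz
      have := hψ.le_add_mul_of_le_add_mul hα hu hρ.isBddMeasurable hw hc hθ.le
        (M := q ^ n * M) (by positivity) hργ hwq hu_le
        (fun x hx => (ih x hx).trans_eq (by ring)) z hz
      rw [hθ_eq] at this
      exact this.trans_eq (by ring)
  intro z hz
  exact (le_of_forall_le_add_pow_mul (by positivity) hq fun n => hiter n z hz).trans_eq
    (by simp only [θ]; ring)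

theorem psiInt_le_of_le_add_mul_psiInt (hψ : IsAdmissibleScale ψ ψ' b) (hα : 0 < α)
    {u ρ : ℝ → ℝ} {c γ : ℝ} (hu : IsBddMeasurable b u) (hρ : ContinuousOn ρ (Icc 0 b))
    (hc : 0 ≤ c) (hcγ : c * γ < 1) (hργ : ∀ z ∈ Icc 0 b, psiInt α ψ ψ' ρ z ≤ γ * ρ z)
    (hu_le : ∀ z ∈ Icc 0 b, u z ≤ ρ z + c * psiInt α ψ ψ' u z) (hz : z ∈ Icc 0 b) :
    psiInt α ψ ψ' u z ≤ γ / (1 - c * γ) * ρ z := by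
  have hθ : 0 ≤ (1 - c * γ)⁻¹ := (inv_pos.2 (sub_pos.2 hcγ)).le
  calc psiInt α ψ ψ' u z
      ≤ psiInt α ψ ψ' (fun κ => (1 - c * γ)⁻¹ * ρ κ) z :=
        hψ.psiInt_mono hα hu (hρ.isBddMeasurable.const_mul _) hz fun κ hκ =>
          (hψ.le_div_of_le_add_mul_psiInt hα hu hρ hc hcγ hργ hu_le κ
            ⟨hκ.1.le, hκ.2.le.trans hz.2⟩).trans_eq (div_eq_inv_mul _ _)
    _ ≤ (1 - c * γ)⁻¹ * (γ * ρ z) := by rw [psiInt_const_mul]; gcongr; exact hργ z hz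
    _ = γ / (1 - c * γ) * ρ z := by ring

end IsAdmissibleScale

theorem caputo_generalized_ulam_hyers_rassias_stability_general (α b : ℝ) (hα0 : 0 < α) (hα1 : α < 1)
    (ψ ψ' : ℝ → ℝ)
    (hψ_mono : StrictMonoOn ψ (Set.Icc 0 b))
    (hψ_deriv : ∀ z ∈ Set.Icc 0 b, HasDerivWithinAt ψ (ψ' z) (Set.Icc 0 b) z)
    (hψ'_cont : ContinuousOn ψ' (Set.Icc 0 b))
    (hψ'_pos : ∀ z ∈ Set.Icc 0 b, 0 < ψ' z)
    (F : ℝ → ℝ → ℝ → ℝ) (H : ℝ → ℝ → ℝ → ℝ)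
    (hH_cont : ContinuousOn (fun p : ℝ × ℝ × ℝ => H p.1 p.2.1 p.2.2)
      (Set.Icc 0 b ×ˢ Set.Icc 0 b ×ˢ (Set.univ : Set ℝ)))
    (n k : ℝ → ℝ)
    (hn_cont : ContinuousOn n (Set.Icc 0 b))
    (hk_cont : ContinuousOn k (Set.Icc 0 b))
    (hQ1 : ∀ z ∈ Set.Icc 0 b, ∀ u₁ u₂ w₁ w₂ : ℝ,
      |F z u₁ u₂ - F z w₁ w₂| ≤ n z * (|u₁ - w₁| + |u₂ - w₂|))
    (hQ2 : ∀ z ∈ Set.Icc 0 b, ∀ τ ∈ Set.Icc 0 b, ∀ u w : ℝ,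
      |H z τ u - H z τ w| ≤ k z * |u - w|)
    (W₁ W₂ : ℝ)
    (hW₁ : W₁ = sSup ((fun z => |n z|) '' Set.Icc 0 b))
    (hW₂ : W₂ = sSup ((fun z => |k z|) '' Set.Icc 0 b))
    (ρ : ℝ → ℝ)
    (hρ_cont : ContinuousOn ρ (Set.Icc 0 b))
    (γ : ℝ)
    (hQ3 : ∀ z ∈ Set.Icc 0 b, psiInt α ψ ψ' ρ z ≤ γ * ρ z)
    (hsmall : W₁ * (1 + W₂) * γ < 1)
    (ω ω' : ℝ → ℝ)
    (hω_deriv : ∀ z ∈ Set.Icc 0 b, HasDerivWithinAt ω (ω' z) (Set.Icc 0 b) z)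
    (hω'_cont : ContinuousOn ω' (Set.Icc 0 b))
    (hω_approx : ∀ z ∈ Set.Icc 0 b,
      |psiCaputo α ψ ψ' ω' z -
        F z (ω z) (psiInt α ψ ψ' (fun τ => H z τ (psiCaputo α ψ ψ' ω' τ)) z)| ≤ ρ z)
    (v v' : ℝ → ℝ)
    (hv_deriv : ∀ z ∈ Set.Icc 0 b, HasDerivWithinAt v (v' z) (Set.Icc 0 b) z)
    (hv'_cont : ContinuousOn v' (Set.Icc 0 b))
    (hv_sol : ∀ z ∈ Set.Icc 0 b,
      psiCaputo α ψ ψ' v' z =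
        F z (v z) (psiInt α ψ ψ' (fun τ => H z τ (psiCaputo α ψ ψ' v' τ)) z))
    (hv0 : v 0 = ω 0) :
    ∀ z ∈ Set.Icc 0 b,
      |ω z - v z| ≤ γ / (1 - W₁ * (1 + W₂) * γ) * ρ z := by
  intro z hz
  have hψ : IsAdmissibleScale ψ ψ' b := ⟨hψ_mono, hψ_deriv, hψ'_cont, hψ'_pos⟩
  have hNω := hψ.isBddMeasurable_psiCaputo hα1 hω'_cont
  have hNv := hψ.isBddMeasurable_psiCaputo hα1 hv'_cont
  set E := psiInt α ψ ψ' fun τ => |psiCaputo α ψ ψ' ω' τ - psiCaputo α ψ ψ' v' τ|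
  have hn x (hx : x ∈ Icc 0 b) : |n x| ≤ W₁ :=
    hW₁ ▸ abs_le_sSup_image_abs isCompact_Icc hn_cont hx
  have hk x (hx : x ∈ Icc 0 b) : |k x| ≤ W₂ :=
    hW₂ ▸ abs_le_sSup_image_abs isCompact_Icc hk_cont hx
  have hW₁0 : 0 ≤ W₁ := (abs_nonneg _).trans (hn z hz)
  have hW₂0 : 0 ≤ W₂ := (abs_nonneg _).trans (hk z hz)
  have hdiff x (hx : x ∈ Icc 0 b) : |ω x - v x| ≤ E x :=
    hψ.abs_sub_le_psiInt_abs_psiCaputo_sub hα0 hα1 hω_deriv hω'_cont hv_deriv hv'_cont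
      hv0.symm hx
  have hkey x (hx : x ∈ Icc 0 b) :
      |psiCaputo α ψ ψ' ω' x - psiCaputo α ψ ψ' v' x| ≤ ρ x + W₁ * (1 + W₂) * E x := by
    set Iω := psiInt α ψ ψ' (fun τ => H x τ (psiCaputo α ψ ψ' ω' τ)) x
    set Iv := psiInt α ψ ψ' (fun τ => H x τ (psiCaputo α ψ ψ' v' τ)) x
    have hI : |Iω - Iv| ≤ W₂ * E x := hψ.abs_psiInt_comp_sub_le hα0
      (hH_cont.comp (continuous_const.prodMk continuous_id).continuousOn fun q hq => ⟨hx, hq⟩)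
      (fun τ hτ u w => (hQ2 x hx τ hτ u w).trans (mul_le_mul_of_nonneg_right
        ((le_abs_self _).trans (hk x hx)) (abs_nonneg _))) hNω hNv hx
    have hE : 0 ≤ E x := hψ.psiInt_nonneg hα0 hx fun τ _ => abs_nonneg _
    calc |psiCaputo α ψ ψ' ω' x - psiCaputo α ψ ψ' v' x|
        ≤ |psiCaputo α ψ ψ' ω' x - F x (ω x) Iω| + |F x (ω x) Iω - F x (v x) Iv| := by
          rw [hv_sol x hx]; exact abs_sub_le _ _ _
      _ ≤ ρ x + |n x| * (|ω x - v x| + |Iω - Iv|) :=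
          add_le_add (hω_approx x hx) ((hQ1 x hx _ _ _ _).trans
            (mul_le_mul_of_nonneg_right (le_abs_self _) (by positivity)))
      _ ≤ ρ x + W₁ * (E x + W₂ * E x) := by gcongr; exacts [hn x hx, hdiff x hx]
      _ = ρ x + W₁ * (1 + W₂) * E x := by ring
  exact (hdiff z hz).trans (hψ.psiInt_le_of_le_add_mul_psiInt hα0 (hNω.sub hNv).abs hρ_cont
    (by positivity) hsmall hQ3 hkey hz)

/-- Generalized Ulam–Hyers–Rassias stability: under (Q1), (Q2), (Q3) and
`W₁(1+W₂)γ < 1`, a `ρ`-approximate solution `ω` and an exact solution `ϑ` with the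
same initial value satisfy `|ω(z) - ϑ(z)| ≤ B ρ(z)` with `B = γ / (1 - W₁(1+W₂)γ)`. -/
theorem caputo_generalized_ulam_hyers_rassias_stability (α b : ℝ) (hα0 : 0 < α) (hα1 : α < 1)
    (hb : 0 < b)
    (ψ ψ' : ℝ → ℝ)
    (hψ_mono : StrictMonoOn ψ (Set.Icc 0 b))
    (hψ_deriv : ∀ z ∈ Set.Icc 0 b, HasDerivWithinAt ψ (ψ' z) (Set.Icc 0 b) z)
    (hψ'_cont : ContinuousOn ψ' (Set.Icc 0 b))
    (hψ'_pos : ∀ z ∈ Set.Icc 0 b, 0 < ψ' z)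
    (F : ℝ → ℝ → ℝ → ℝ) (H : ℝ → ℝ → ℝ → ℝ)
    (hF_cont : ContinuousOn (fun p : ℝ × ℝ × ℝ => F p.1 p.2.1 p.2.2)
      (Set.Icc 0 b ×ˢ (Set.univ : Set ℝ) ×ˢ (Set.univ : Set ℝ)))
    (hH_cont : ContinuousOn (fun p : ℝ × ℝ × ℝ => H p.1 p.2.1 p.2.2)
      (Set.Icc 0 b ×ˢ Set.Icc 0 b ×ˢ (Set.univ : Set ℝ)))
    (n k : ℝ → ℝ)
    (hn_cont : ContinuousOn n (Set.Icc 0 b))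
    (hk_cont : ContinuousOn k (Set.Icc 0 b))
    (hQ1 : ∀ z ∈ Set.Icc 0 b, ∀ u₁ u₂ w₁ w₂ : ℝ,
      |F z u₁ u₂ - F z w₁ w₂| ≤ n z * (|u₁ - w₁| + |u₂ - w₂|))
    (hQ2 : ∀ z ∈ Set.Icc 0 b, ∀ τ ∈ Set.Icc 0 b, ∀ u w : ℝ,
      |H z τ u - H z τ w| ≤ k z * |u - w|)
    (W₁ W₂ : ℝ)
    (hW₁ : W₁ = sSup ((fun z => |n z|) '' Set.Icc 0 b))
    (hW₂ : W₂ = sSup ((fun z => |k z|) '' Set.Icc 0 b))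
    (ρ : ℝ → ℝ)
    (hρ_cont : ContinuousOn ρ (Set.Icc 0 b))
    (hρ_mono : StrictMonoOn ρ (Set.Icc 0 b))
    (hρ_nonneg : ∀ z ∈ Set.Icc 0 b, 0 ≤ ρ z)
    (γ : ℝ) (hγ : 0 < γ)
    (hQ3 : ∀ z ∈ Set.Icc 0 b, psiInt α ψ ψ' ρ z ≤ γ * ρ z)
    (hsmall : W₁ * (1 + W₂) * γ < 1)
    (ω ω' : ℝ → ℝ)
    (hω_deriv : ∀ z ∈ Set.Icc 0 b, HasDerivWithinAt ω (ω' z) (Set.Icc 0 b) z)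
    (hω'_cont : ContinuousOn ω' (Set.Icc 0 b))
    (hω_approx : ∀ z ∈ Set.Icc 0 b,
      |psiCaputo α ψ ψ' ω' z -
        F z (ω z) (psiInt α ψ ψ' (fun τ => H z τ (psiCaputo α ψ ψ' ω' τ)) z)| ≤ ρ z)
    (v v' : ℝ → ℝ)
    (hv_deriv : ∀ z ∈ Set.Icc 0 b, HasDerivWithinAt v (v' z) (Set.Icc 0 b) z)
    (hv'_cont : ContinuousOn v' (Set.Icc 0 b))
    (hv_sol : ∀ z ∈ Set.Icc 0 b,
      psiCaputo α ψ ψ' v' z =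
        F z (v z) (psiInt α ψ ψ' (fun τ => H z τ (psiCaputo α ψ ψ' v' τ)) z))
    (hv0 : v 0 = ω 0) :
    ∀ z ∈ Set.Icc 0 b,
      |ω z - v z| ≤ γ / (1 - W₁ * (1 + W₂) * γ) * ρ z :=
  caputo_generalized_ulam_hyers_rassias_stability_general α b hα0 hα1 ψ ψ' hψ_mono hψ_deriv hψ'_cont
    hψ'_pos F H hH_cont n k hn_cont hk_cont hQ1 hQ2 W₁ W₂ hW₁ hW₂ ρ hρ_cont γ hQ3 hsmall ω ω'
    hω_deriv hω'_cont hω_approx v v' hv_deriv hv'_cont hv_sol hv0
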